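/- arXiv:math/0102106 — 2 statements merged into one kernel-verified Lean document; each statement's English description precedes it below -/
import Mathlib

section
/- Boundary evaluation of p: with p_{i,j,k}(L1,L2,M) as in Theorem 5, setting L1 = L2 = i+j-1 yields p_{i,j,k}(i+j-1, i+j-1, M) = δ_{i,0} δ_{j,0} q^{T_k} C(M-i-j, k), where δ is the Kronecker delta and C the q-binomial coefficient. -/
open Finset

noncomputable def q : RatFunc ℚ := RatFunc.X

/-- Triangular number `T m = m(m+1)/2` (integer division; note `T (-1) = 0`). -/
def T (m : ℤ) : ℤ := m * (m + 1) / 2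

/-- The Gaussian binomial coefficient `C(N, n) = (q^{N-n+1};q)_n / (q;q)_n` for
`n ≥ 0`, and `0` when out of range (`n < 0`).  For `0 ≤ N < n` the product
contains the factor `1 - q^0 = 0`, so it vanishes. -/
noncomputable def qbin (N n : ℤ) : RatFunc ℚ :=
  if n < 0 then 0
  else ∏ r ∈ Finset.range n.toNat, (1 - q ^ (N - (r : ℤ))) / (1 - q ^ ((r : ℤ) + 1))


/-- The single sum `p_{i,j,k}(L1,L2,M)` of Theorem 5; all terms with `s > i`
vanish since `qbin (L1 - s) (i - s) = 0` for `i - s < 0`, so the range below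
captures the full sum over `s ≥ 0`. -/
noncomputable def p (i j k L1 L2 M : ℤ) : RatFunc ℚ :=
  ∑ s ∈ Finset.range (i.toNat + 1),
    q ^ ((s : ℤ) * (M + 2) - T s + T (i - s) + T (j - s) + T (k - s)) *
      qbin (L1 - s) (i - s) * qbin (L2 - i) (j - s) * qbin (L2 - i - j + s) s *
      qbin (M - i - j) (k - s)

/-
At `L1 = L2 = i + j - 1` the summand of index `s` contains `C(s - 1, s)`, which vanishes for
`s > 0`; the term `s = 0` contains `C(i + j - 1, i)` and `C(j - 1, j)`, one of which vanishes
unless `i = j = 0`.  In that case `p` is its single term `s = 0`.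
-/

lemma qbin_zero_right (N : ℤ) : qbin N 0 = 1 := by
  simp [qbin]

lemma qbin_eq_zero_of_lt {N n : ℤ} (hN : 0 ≤ N) (hNn : N < n) : qbin N n = 0 := by
  rw [qbin, if_neg (by omega)]
  refine prod_eq_zero (i := N.toNat) (mem_range.2 (by omega)) ?_
  simp [Int.toNat_of_nonneg hN]

/-- Boundary evaluation of `p` at `L1 = L2 = i + j - 1`. -/
theorem p_boundary_evaluation (i j k : ℕ) (M : ℤ) :
    p i j k ((i : ℤ) + j - 1) ((i : ℤ) + j - 1) M =
      (if i = 0 then 1 else 0) * (if j = 0 then 1 else 0) * q ^ (T k) *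
        qbin (M - i - j) k := by
  unfold p
  by_cases hij : i = 0 ∧ j = 0
  · obtain ⟨rfl, rfl⟩ := hij
    simp [T, qbin_zero_right]
  have hδ : (if i = 0 then 1 else 0 : RatFunc ℚ) * (if j = 0 then 1 else 0) = 0 := by
    split_ifs <;> simp_all
  rw [hδ, zero_mul, zero_mul]
  refine sum_eq_zero fun s _ => ?_
  obtain rfl | hs := Nat.eq_zero_or_pos s
  · obtain rfl | hj := Nat.eq_zero_or_pos j
    · have hC : qbin ((i : ℤ) + (0 : ℕ) - 1 - (0 : ℕ)) ((i : ℤ) - (0 : ℕ)) = 0 :=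
        qbin_eq_zero_of_lt (by omega) (by omega)
      simp only [hC, mul_zero, zero_mul]
    · have hC : qbin ((i : ℤ) + j - 1 - i) ((j : ℤ) - (0 : ℕ)) = 0 :=
        qbin_eq_zero_of_lt (by omega) (by omega)
      simp only [hC, mul_zero, zero_mul]
  · have hC : qbin ((i : ℤ) + j - 1 - i - j + s) s = 0 :=
      qbin_eq_zero_of_lt (by omega) (by omega)
    simp only [hC, mul_zero, zero_mul]
end

section
/- Simple recurrence in L1: g_{i,j,k}(L1,L2,M) = g_{i,j,k}(L1-1, L2, M) + q^{L1} g_{i-1,j,k}(L1-1, L2-1, M-1), for all integers i, j, k, L1, L2, M, where g is the triple sum of Theorem 5. -/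
open Finset

/-- The sum `g_{i,j,k}(L1,L2,M)` of Theorem 5 of Berkovich–Riese: the sum over
nonnegative integers `a, b, c, ab, ac, bc` with `i = a+ab+ac`, `j = b+ab+bc`,
`k = c+ac+bc` (summation variables `ab, ac, bc`; `a, b, c` are determined). -/
noncomputable def g (i j k L1 L2 M : ℤ) : RatFunc ℚ :=
  ∑ ab ∈ Finset.range (i.toNat + 1), ∑ ac ∈ Finset.range (i.toNat + 1),
    ∑ bc ∈ Finset.range (j.toNat + 1),
      if (ab : ℤ) + ac ≤ i ∧ (ab : ℤ) + bc ≤ j ∧ (ac : ℤ) + bc ≤ k then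
        (let a : ℤ := i - ab - ac
         let b : ℤ := j - ab - bc
         let c : ℤ := k - ac - bc
         let t : ℤ := a + b + c + ab + ac + bc
         q ^ (T t + T ab + T ac + T ((bc : ℤ) - 1)) *
           (q ^ (bc : ℤ) * qbin (L1 - t + a) a * qbin (L2 - t + b) b * qbin (L2 - t) ab *
               qbin (M - t + c) c * qbin (M - t) ac * qbin (M - t) bc +
             qbin (L1 - t + a - 1) (a - 1) * qbin (L2 - t + b) b * qbin (L2 - t) ab *
               qbin (M - t + c) c * qbin (M - t) ac * qbin (M - t) ((bc : ℤ) - 1)))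
      else 0

/-! The recurrence holds summand by summand. Lowering `a`, `L1`, `L2`, `M` by one lowers
`t = a + b + c + ab + ac + bc` by one, so the `L2`- and `M`-binomials of the shifted summand are
those of the original one; q-Pascal applied to the two binomials in `a`, together with
`T t = T (t - 1) + t`, gives the identity. Summands with `a`, `b` or `c` negative vanish, so all
three sums may be taken over the same box of indices. -/

lemma q_pow_sub_one_ne_zero {n : ℕ} (hn : 0 < n) : q ^ n - 1 ≠ 0 := by
  have h := Polynomial.X_pow_sub_C_ne_zero hn (1 : ℚ)
  rwa [← (RatFunc.algebraMap_injective ℚ).ne_iff, map_sub, map_pow, Polynomial.C_1, map_one,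
    map_zero, RatFunc.algebraMap_X] at h

lemma one_sub_q_zpow_succ_ne_zero (r : ℕ) : 1 - q ^ ((r : ℤ) + 1) ≠ 0 := by
  rw [← neg_sub, neg_ne_zero]
  exact_mod_cast q_pow_sub_one_ne_zero r.succ_pos

lemma qbin_of_neg (N : ℤ) {n : ℤ} (hn : n < 0) : qbin N n = 0 := if_pos hn

lemma qbin_natCast (N : ℤ) (k : ℕ) :
    qbin N k = (∏ r ∈ range k, (1 - q ^ (N - r))) / ∏ r ∈ range k, (1 - q ^ ((r : ℤ) + 1)) := by
  rw [qbin, if_neg (by omega), Int.toNat_natCast, prod_div_distrib]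

lemma qbin_pascal_succ (N : ℤ) (k : ℕ) :
    qbin N (k + 1) = qbin (N - 1) (k + 1) + q ^ (N - (k + 1)) * qbin (N - 1) k := by
  have hD : ∏ r ∈ range k, (1 - q ^ ((r : ℤ) + 1)) ≠ 0 :=
    prod_ne_zero_iff.2 fun r _ => one_sub_q_zpow_succ_ne_zero r
  have hq : q ^ N = q ^ (N - (k + 1)) * q ^ ((k : ℤ) + 1) := by
    rw [← zpow_add₀ RatFunc.X_ne_zero]; ring_nf
  have hk := one_sub_q_zpow_succ_ne_zero k
  simp only [← Nat.cast_succ, qbin_natCast]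
  rw [prod_range_succ' (fun r : ℕ => 1 - q ^ (N - r)), prod_range_succ, prod_range_succ]
  simp only [Nat.cast_succ, Nat.cast_zero, sub_zero, sub_sub, add_comm (1 : ℤ)]
  rw [hq]
  field_simp
  ring

lemma qbin_pascal (N n : ℤ) : qbin N n = qbin (N - 1) n + q ^ (N - n) * qbin (N - 1) (n - 1) := by
  rcases lt_trichotomy n 0 with hn | rfl | hn
  · simp [qbin_of_neg _ hn, qbin_of_neg _ (show n - 1 < 0 by omega)]
  · simp [qbin]
  · obtain ⟨k, rfl⟩ : ∃ k : ℕ, n = k + 1 := ⟨n.toNat - 1, by omega⟩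
    simpa using qbin_pascal_succ N k

lemma T_sub_one (t : ℤ) : T (t - 1) = T t - t := by
  have h : t * (t + 1) = (t - 1) * (t - 1 + 1) + 2 * t := by ring
  unfold T
  omega

noncomputable def gSummand (L1 L2 M a b c ab ac bc : ℤ) : RatFunc ℚ :=
  let t := a + b + c + ab + ac + bc
  q ^ (T t + T ab + T ac + T (bc - 1)) *
    (q ^ bc * qbin (L1 - t + a) a * qbin (L2 - t + b) b * qbin (L2 - t) ab *
        qbin (M - t + c) c * qbin (M - t) ac * qbin (M - t) bc +
      qbin (L1 - t + a - 1) (a - 1) * qbin (L2 - t + b) b * qbin (L2 - t) ab *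
        qbin (M - t + c) c * qbin (M - t) ac * qbin (M - t) (bc - 1))

lemma gSummand_eq_zero_of_neg {L1 L2 M a b c : ℤ} (ab ac bc : ℤ) (h : a < 0 ∨ b < 0 ∨ c < 0) :
    gSummand L1 L2 M a b c ab ac bc = 0 := by
  rcases h with h | h | h
  · simp [gSummand, qbin_of_neg _ h, qbin_of_neg _ (show a - 1 < 0 by omega)]
  · simp [gSummand, qbin_of_neg _ h]
  · simp [gSummand, qbin_of_neg _ h]

lemma gSummand_recurrence (L1 L2 M a b c ab ac bc : ℤ) :
    gSummand L1 L2 M a b c ab ac bc =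
      gSummand (L1 - 1) L2 M a b c ab ac bc +
        q ^ L1 * gSummand (L1 - 1) (L2 - 1) (M - 1) (a - 1) b c ab ac bc := by
  obtain ⟨t, ht⟩ : ∃ t, a + b + c + ab + ac + bc = t := ⟨_, rfl⟩
  have ht' : a - 1 + b + c + ab + ac + bc = t - 1 := by rw [← ht]; ring
  simp only [gSummand, ht, ht', show L1 - 1 - (t - 1) + (a - 1) = L1 - t + a - 1 by ring,
    show L1 - 1 - t + a = L1 - t + a - 1 by ring, show L2 - 1 - (t - 1) = L2 - t by ring,
    show M - 1 - (t - 1) = M - t by ring, sub_sub _ (1 : ℤ) 1, one_add_one_eq_two]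
  have pascal_a := qbin_pascal (L1 - t + a) a
  have pascal_a_sub_one := qbin_pascal (L1 - t + a - 1) (a - 1)
  simp only [show L1 - t + a - a = L1 - t by ring, show L1 - t + a - 1 - (a - 1) = L1 - t by ring,
    sub_sub _ (1 : ℤ) 1, one_add_one_eq_two] at pascal_a pascal_a_sub_one
  have hT : q ^ (T t + T ab + T ac + T (bc - 1)) * q ^ (L1 - t) =
      q ^ L1 * q ^ (T (t - 1) + T ab + T ac + T (bc - 1)) := by
    rw [← zpow_add₀ RatFunc.X_ne_zero, ← zpow_add₀ RatFunc.X_ne_zero, T_sub_one t]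
    ring_nf
  generalize qbin (L2 - t + b) b = Cb, qbin (L2 - t) ab = Cab, qbin (M - t + c) c = Cc,
    qbin (M - t) ac = Cac, qbin (M - t) bc = Cbc, qbin (M - t) (bc - 1) = Cbc'
  set E := q ^ (T t + T ab + T ac + T (bc - 1))
  set C₁ := qbin (L1 - t + a - 1) (a - 1)
  set C₂ := qbin (L1 - t + a - 2) (a - 2)
  linear_combination (E * q ^ bc * Cb * Cab * Cc * Cac * Cbc) * pascal_a +
    (E * Cb * Cab * Cc * Cac * Cbc') * pascal_a_sub_one +
    (q ^ bc * C₁ * Cb * Cab * Cc * Cac * Cbc + C₂ * Cb * Cab * Cc * Cac * Cbc') * hT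

lemma g_eq_sum_gSummand (i j k L1 L2 M : ℤ) {A B : ℕ} (hA : i.toNat < A) (hB : j.toNat < B) :
    g i j k L1 L2 M = ∑ ab ∈ range A, ∑ ac ∈ range A, ∑ bc ∈ range B,
      gSummand L1 L2 M (i - ab - ac) (j - ab - bc) (k - ac - bc) ab ac bc := by
  have vanish : ∀ ab ac bc : ℕ, (i < ab + ac ∨ j < ab + bc ∨ k < ac + bc) →
      gSummand L1 L2 M (i - ab - ac) (j - ab - bc) (k - ac - bc) ab ac bc = 0 :=
    fun ab ac bc h => gSummand_eq_zero_of_neg _ _ _ (by omega)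
  have extend : ∀ {m n : ℕ} (f : ℕ → RatFunc ℚ), m ≤ n → (∀ x, m ≤ x → f x = 0) →
      ∑ x ∈ range m, f x = ∑ x ∈ range n, f x := fun f hmn hf =>
    sum_subset (range_subset_range.2 hmn) fun x _ hx => hf x (by simpa using hx)
  unfold g
  rw [extend _ hA fun ab hab => sum_eq_zero fun ac _ => sum_eq_zero fun bc _ => ?_]
  · refine sum_congr rfl fun ab _ => ?_
    rw [extend _ hA fun ac hac => sum_eq_zero fun bc _ => ?_]
    · refine sum_congr rfl fun ac _ => ?_
      rw [extend _ hB fun bc hbc => ?_]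
      · exact sum_congr rfl fun bc _ => ite_eq_left_iff.2 fun h => (vanish ab ac bc (by omega)).symm
      · exact if_neg (by omega)
    · exact if_neg (by omega)
  · exact if_neg (by omega)

/-- Simple recurrence in `L1`. -/
theorem g_simple_recurrence (i j k L1 L2 M : ℤ) :
    g i j k L1 L2 M =
      g i j k (L1 - 1) L2 M + q ^ L1 * g (i - 1) j k (L1 - 1) (L2 - 1) (M - 1) := by
  have hA : i.toNat < i.toNat + 1 := Nat.lt_succ_self _
  have hA' : (i - 1).toNat < i.toNat + 1 := by omega
  have hB : j.toNat < j.toNat + 1 := Nat.lt_succ_self _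
  rw [g_eq_sum_gSummand i j k L1 L2 M hA hB, g_eq_sum_gSummand i j k (L1 - 1) L2 M hA hB,
    g_eq_sum_gSummand (i - 1) j k (L1 - 1) (L2 - 1) (M - 1) hA' hB]
  simp only [mul_sum, ← sum_add_distrib]
  refine sum_congr rfl fun ab _ => sum_congr rfl fun ac _ => sum_congr rfl fun bc _ => ?_
  rw [gSummand_recurrence, sub_right_comm i 1, sub_right_comm (i - ab) 1]
end
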